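/- If an election profile P is uniquely weighted and B is a candidate not in the Smith set of P, then for every candidate A ≠ B, A is a Stable Voting winner in P if and only if A is a Stable Voting winner in P_{-B}. -/
import Mathlib


/-- An election profile: a finite set of candidates and, for each voter,
a strict linear order (ballot) on the candidates.  `ballot v a b = true`
means that voter `v` ranks candidate `a` above candidate `b`. -/
structure Profile (C V : Type) [DecidableEq C] [Fintype V] where
  cands : Finset C
  ballot : V → C → C → Bool
  ballot_irrefl : ∀ v a, a ∈ cands → ballot v a a = false
  ballot_asymm_total : ∀ v a b, a ∈ cands → b ∈ cands → a ≠ b →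
    (ballot v a b = true ↔ ¬ ballot v b a = true)
  ballot_trans : ∀ v a b c, a ∈ cands → b ∈ cands → c ∈ cands →
    ballot v a b = true → ballot v b c = true → ballot v a c = true

variable {C V : Type} [DecidableEq C] [Fintype V]

/-- The margin of `a` vs. `b`: the number of voters ranking `a` above `b`
minus the number of voters ranking `b` above `a`. -/
def Profile.margin (P : Profile C V) (a b : C) : ℤ :=
  ((Finset.univ.filter fun v => P.ballot v a b = true).card : ℤ) -
  ((Finset.univ.filter fun v => P.ballot v b a = true).card : ℤ)

/-- The restriction of a profile to a subset `S` of the candidates. -/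
def Profile.restrict (P : Profile C V) (S : Finset C) : Profile C V where
  cands := P.cands ∩ S
  ballot := P.ballot
  ballot_irrefl := fun v a ha => P.ballot_irrefl v a (Finset.mem_inter.mp ha).1
  ballot_asymm_total := fun v a b ha hb => P.ballot_asymm_total v a b
    (Finset.mem_inter.mp ha).1 (Finset.mem_inter.mp hb).1
  ballot_trans := fun v a b c ha hb hc => P.ballot_trans v a b c
    (Finset.mem_inter.mp ha).1 (Finset.mem_inter.mp hb).1 (Finset.mem_inter.mp hc).1

/-- The profile `P₋B` obtained from `P` by removing candidate `b` from all ballots. -/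
def Profile.remove (P : Profile C V) (b : C) : Profile C V :=
  P.restrict (P.cands.erase b)

/-- Auxiliary, fuel-based definition of the Stable Voting winners. -/
def SVaux : ℕ → Profile C V → Set C
  | 0, P => ↑P.cands
  | n + 1, P =>
    if P.cands.card ≤ 1 then ↑P.cands
    else { a | ∃ b ∈ P.cands, b ≠ a ∧ a ∈ SVaux n (P.remove b) ∧
      ∀ x ∈ P.cands, ∀ y ∈ P.cands, x ≠ y → x ∈ SVaux n (P.remove y) →
        P.margin x y ≤ P.margin a b }

/-- The set of Stable Voting winners of a profile.  If there is a single
candidate, that candidate wins; otherwise `a` is a winner iff there is a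
candidate `b ≠ a` such that `a` is a Stable Voting winner after removing `b`
and the margin of `a` vs. `b` is maximal among margins of pairs `(x, y)` of
distinct candidates such that `x` is a Stable Voting winner after removing `y`. -/
def SV (P : Profile C V) : Set C := SVaux P.cands.card P

/-- `a` beats `b` head-to-head: the margin of `a` vs. `b` is positive. -/
def Profile.beats (P : Profile C V) (a b : C) : Prop := 0 < P.margin a b

/-- A Condorcet winner: a candidate beating every other candidate head-to-head. -/
def CondorcetWinner (P : Profile C V) (a : C) : Prop :=
  a ∈ P.cands ∧ ∀ b ∈ P.cands, b ≠ a → P.beats a b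

/-- `S` is a nonempty set of candidates each of whose members beats each
nonmember head-to-head. -/
def Dominant (P : Profile C V) (S : Finset C) : Prop :=
  S ⊆ P.cands ∧ S.Nonempty ∧ ∀ a ∈ S, ∀ b ∈ P.cands, b ∉ S → P.beats a b

/-- `S` is the Smith set of `P`: the smallest nonempty set of candidates each
of whose members beats each nonmember head-to-head. -/
def IsSmith (P : Profile C V) (S : Finset C) : Prop :=
  Dominant P S ∧ ∀ T, Dominant P T → S ⊆ T

/-- A profile is uniquely weighted if distinct ordered pairs of distinct
candidates have distinct margins. -/
def UniquelyWeighted (P : Profile C V) : Prop :=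
  ∀ a b a' b', a ∈ P.cands → b ∈ P.cands → a' ∈ P.cands → b' ∈ P.cands →
    a ≠ b → a' ≠ b' → (a, b) ≠ (a', b') → P.margin a b ≠ P.margin a' b'

/-- `a` is stable for SV in `P`: there is a candidate `b` whom `a` beats
head-to-head such that `a` is a Stable Voting winner in `P₋b`. -/
def StableFor (P : Profile C V) (a : C) : Prop :=
  ∃ b ∈ P.cands, P.beats a b ∧ a ∈ SV (P.remove b)


lemma Profile.ext' {P Q : Profile C V} (h1 : P.cands = Q.cands)
    (h2 : P.ballot = Q.ballot) : P = Q := by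
  cases P; cases Q; cases h1; cases h2; rfl

lemma remove_cands (P : Profile C V) (b : C) :
    (P.remove b).cands = P.cands.erase b :=
  Finset.inter_eq_right.mpr (Finset.erase_subset _ _)

lemma margin_remove (P : Profile C V) (b : C) :
    (P.remove b).margin = P.margin := rfl

lemma remove_comm (P : Profile C V) (a b : C) :
    (P.remove a).remove b = (P.remove b).remove a := by
  apply Profile.ext'
  · rw [remove_cands, remove_cands, remove_cands, remove_cands, Finset.erase_right_comm]
  · rfl

lemma remove_card (P : Profile C V) {b : C} (hb : b ∈ P.cands) :
    (P.remove b).cands.card = P.cands.card - 1 := by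
  rw [remove_cands, Finset.card_erase_of_mem hb]

lemma margin_antisymm (P : Profile C V) (a b : C) : P.margin a b = -P.margin b a := by
  unfold Profile.margin; ring

lemma SVaux_subset : ∀ (n : ℕ) (P : Profile C V) (a : C), a ∈ SVaux n P → a ∈ P.cands := by
  intro n
  induction n with
  | zero => intro P a ha; exact ha
  | succ n ih =>
    intro P a ha
    rw [SVaux] at ha
    split at ha
    · exact ha
    · obtain ⟨b, hb, -, haux, -⟩ := ha
      have := ih _ _ haux
      rw [remove_cands] at this
      exact Finset.mem_of_mem_erase this

lemma SV_subset {P : Profile C V} {a : C} (h : a ∈ SV P) : a ∈ P.cands :=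
  SVaux_subset _ _ _ h

lemma SVaux_eq : ∀ (n : ℕ) (P : Profile C V), P.cands.card ≤ n → SVaux n P = SV P := by
  intro n
  induction n with
  | zero =>
    intro P h
    have h0 : P.cands.card = 0 := Nat.le_zero.mp h
    rw [SV, h0]
  | succ n ih =>
    intro P h
    by_cases h1 : P.cands.card ≤ 1
    · have e1 : SVaux (n+1) P = ↑P.cands := by rw [SVaux, if_pos h1]
      have e2 : SV P = ↑P.cands := by
        rcases (by omega : P.cands.card = 0 ∨ P.cands.card = 1) with h0 | h0
        · rw [SV, h0]; rfl
        · rw [SV, h0, SVaux, if_pos h1]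
      rw [e1, e2]
    · obtain ⟨m, hm⟩ : ∃ m, P.cands.card = m + 1 := ⟨P.cands.card - 1, by omega⟩
      have key : ∀ b ∈ P.cands, SVaux n (P.remove b) = SVaux m (P.remove b) := by
        intro b hb
        have hc : (P.remove b).cands.card = m := by rw [remove_card P hb]; omega
        rw [ih _ (by omega), SV, hc]
      rw [SV, hm, SVaux, SVaux, if_neg (by omega), if_neg (by omega)]
      ext a
      simp only [Set.mem_setOf_eq]
      constructor
      · rintro ⟨b, hb, hba, hx, hmax⟩
        exact ⟨b, hb, hba, by rw [← key b hb]; exact hx,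
          fun x hx' y hy' hxy hmem => hmax x hx' y hy' hxy (by rw [key y hy']; exact hmem)⟩
      · rintro ⟨b, hb, hba, hx, hmax⟩
        exact ⟨b, hb, hba, by rw [key b hb]; exact hx,
          fun x hx' y hy' hxy hmem => hmax x hx' y hy' hxy (by rw [← key y hy']; exact hmem)⟩

lemma mem_SV_iff {P : Profile C V} (h2 : 2 ≤ P.cands.card) (a : C) :
    a ∈ SV P ↔ ∃ b ∈ P.cands, b ≠ a ∧ a ∈ SV (P.remove b) ∧
      ∀ x ∈ P.cands, ∀ y ∈ P.cands, x ≠ y → x ∈ SV (P.remove y) →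
        P.margin x y ≤ P.margin a b := by
  obtain ⟨m, hm⟩ : ∃ m, P.cands.card = m + 1 := ⟨P.cands.card - 1, by omega⟩
  have key : ∀ b ∈ P.cands, SVaux m (P.remove b) = SV (P.remove b) := by
    intro b hb
    exact SVaux_eq m _ (by rw [remove_card P hb]; omega)
  rw [SV, hm, SVaux, if_neg (by omega)]
  simp only [Set.mem_setOf_eq]
  constructor
  · rintro ⟨b, hb, hba, hx, hmax⟩
    exact ⟨b, hb, hba, by rw [← key b hb]; exact hx,
      fun x hx' y hy' hxy hmem => hmax x hx' y hy' hxy (by rw [key y hy']; exact hmem)⟩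
  · rintro ⟨b, hb, hba, hx, hmax⟩
    exact ⟨b, hb, hba, by rw [key b hb]; exact hx,
      fun x hx' y hy' hxy hmem => hmax x hx' y hy' hxy (by rw [← key y hy']; exact hmem)⟩

lemma SV_small {P : Profile C V} (h1 : P.cands.card ≤ 1) : SV P = ↑P.cands := by
  rcases (by omega : P.cands.card = 0 ∨ P.cands.card = 1) with h0 | h0
  · rw [SV, h0]; rfl
  · rw [SV, h0, SVaux, if_pos h1]

lemma UW_remove {P : Profile C V} (hu : UniquelyWeighted P) (c : C) :
    UniquelyWeighted (P.remove c) := by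
  intro a b a' b' ha hb ha' hb' hab hab' hne
  rw [remove_cands] at ha hb ha' hb'
  exact hu a b a' b' (Finset.mem_of_mem_erase ha) (Finset.mem_of_mem_erase hb)
    (Finset.mem_of_mem_erase ha') (Finset.mem_of_mem_erase hb') hab hab' hne

lemma SV_nonempty : ∀ (n : ℕ) (P : Profile C V), P.cands.card = n →
    P.cands.Nonempty → (SV P).Nonempty := by
  intro n
  induction n with
  | zero =>
    intro P h hne
    exact absurd (Finset.card_eq_zero.mp h) hne.ne_empty
  | succ n ih =>
    intro P hcard hne
    by_cases h1 : P.cands.card ≤ 1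
    · rw [SV_small h1]
      exact ⟨hne.choose, hne.choose_spec⟩
    · push_neg at h1
      classical
      obtain ⟨a0, ha0, b0, hb0, hab0⟩ := Finset.one_lt_card.mp h1
      have hrb : (P.remove b0).cands.card = n := by rw [remove_card P hb0]; omega
      have hrne : (P.remove b0).cands.Nonempty := Finset.card_pos.mp (by omega)
      obtain ⟨x0, hx0⟩ := ih (P.remove b0) hrb hrne
      have hx0c := SV_subset hx0
      rw [remove_cands] at hx0c
      set Pr := (P.cands ×ˢ P.cands).filter
        (fun p => p.1 ≠ p.2 ∧ p.1 ∈ SV (P.remove p.2)) with hPr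
      have hPrne : Pr.Nonempty := by
        refine ⟨(x0, b0), Finset.mem_filter.mpr ⟨Finset.mem_product.mpr
          ⟨Finset.mem_of_mem_erase hx0c, hb0⟩, (Finset.mem_erase.mp hx0c).1, hx0⟩⟩
      obtain ⟨p, hp, hpmax⟩ := Finset.exists_max_image Pr (fun p => P.margin p.1 p.2) hPrne
      obtain ⟨hpmem, hpne, hpsv⟩ := Finset.mem_filter.mp hp
      obtain ⟨hp1, hp2⟩ := Finset.mem_product.mp hpmem
      refine ⟨p.1, (mem_SV_iff (by omega) p.1).mpr ⟨p.2, hp2, hpne.symm, hpsv, ?_⟩⟩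
      intro x hx y hy hxy hmem
      exact hpmax (x, y) (Finset.mem_filter.mpr ⟨Finset.mem_product.mpr ⟨hx, hy⟩, hxy, hmem⟩)

lemma SV_nonempty' (P : Profile C V) (h : P.cands.Nonempty) : (SV P).Nonempty :=
  SV_nonempty _ P rfl h

lemma SV_unique {P : Profile C V} (hu : UniquelyWeighted P) {a1 a2 : C}
    (h1 : a1 ∈ SV P) (h2 : a2 ∈ SV P) : a1 = a2 := by
  by_cases hc : 2 ≤ P.cands.card
  · obtain ⟨b1, hb1, hb1a, hs1, hmax1⟩ := (mem_SV_iff hc a1).mp h1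
    obtain ⟨b2, hb2, hb2a, hs2, hmax2⟩ := (mem_SV_iff hc a2).mp h2
    have ha1 : a1 ∈ P.cands := SV_subset h1
    have ha2 : a2 ∈ P.cands := SV_subset h2
    have e1 : P.margin a1 b1 ≤ P.margin a2 b2 := hmax2 a1 ha1 b1 hb1 hb1a.symm hs1
    have e2 : P.margin a2 b2 ≤ P.margin a1 b1 := hmax1 a2 ha2 b2 hb2 hb2a.symm hs2
    by_contra hne
    exact hu a1 b1 a2 b2 ha1 hb1 ha2 hb2 hb1a.symm hb2a.symm
      (fun h => hne (congrArg Prod.fst h)) (le_antisymm e1 e2)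
  · rw [SV_small (by omega)] at h1 h2
    have := Finset.card_le_one.mp (by omega : P.cands.card ≤ 1)
    exact this a1 h1 a2 h2

lemma SV_CW : ∀ (n : ℕ) (P : Profile C V), P.cands.card = n →
    ∀ c, CondorcetWinner P c → SV P = {c} := by
  intro n
  induction n with
  | zero =>
    intro P h c hc
    exact absurd hc.1 (by simp [Finset.card_eq_zero.mp h])
  | succ n ih =>
    intro P hcard c hc
    by_cases h1 : P.cands.card ≤ 1
    · have : P.cands = {c} := Finset.eq_singleton_iff_unique_mem.mpr
        ⟨hc.1, fun y hy => Finset.card_le_one.mp h1 y hy c hc.1⟩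
      rw [SV_small h1, this, Finset.coe_singleton]
    · push_neg at h1
      classical
      have hcmem := hc.1
      have hCWrem : ∀ y ∈ P.cands, y ≠ c → CondorcetWinner (P.remove y) c := by
        intro y hy hyc
        refine ⟨by rw [remove_cands]; exact Finset.mem_erase.mpr ⟨Ne.symm hyc, hcmem⟩, ?_⟩
        intro b hb hbc
        rw [remove_cands] at hb
        exact hc.2 b (Finset.mem_of_mem_erase hb) hbc
      have hrec : ∀ y ∈ P.cands, y ≠ c → SV (P.remove y) = {c} := by
        intro y hy hyc
        exact ih (P.remove y) (by rw [remove_card P hy]; omega) c (hCWrem y hy hyc)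
      ext A
      rw [mem_SV_iff (by omega), Set.mem_singleton_iff]
      constructor
      · rintro ⟨b, hb, hba, hA, hmax⟩
        by_cases hbc : b = c
        · exfalso
          rw [hbc] at hA
          have hAmem := SV_subset hA
          rw [remove_cands] at hAmem
          have hAb : A ≠ c := (Finset.mem_erase.mp hAmem).1
          obtain ⟨y0, hy0, hy0c⟩ := Finset.exists_mem_ne h1 c
          have hcy0 : c ∈ SV (P.remove y0) := by
            rw [hrec y0 hy0 hy0c]; rfl
          have hle := hmax c hcmem y0 hy0 (Ne.symm hy0c) hcy0
          rw [hbc] at hle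
          have hpos : 0 < P.margin c y0 := hc.2 y0 hy0 hy0c
          have hneg : 0 < P.margin c A := hc.2 A (Finset.mem_of_mem_erase hAmem) hAb
          rw [margin_antisymm P A c] at hle
          omega
        · have := hA
          rw [hrec b hb hbc] at this
          exact this
      · intro hA
        rw [hA]
        obtain ⟨b, hb, hbmax⟩ := Finset.exists_max_image (P.cands.erase c)
          (fun y => P.margin c y) (by
            rw [← Finset.card_pos, Finset.card_erase_of_mem hcmem]; omega)
        have hbA : b ≠ c := (Finset.mem_erase.mp hb).1
        have hbmem : b ∈ P.cands := Finset.mem_of_mem_erase hb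
        refine ⟨b, hbmem, hbA, by rw [hrec b hbmem hbA]; rfl, ?_⟩
        intro x hx y hy hxy hmem
        by_cases hyc : y = c
        · rw [hyc] at hmem hxy ⊢
          have hpos : 0 < P.margin c x := hc.2 x hx hxy
          have hpos2 : 0 < P.margin c b := hc.2 b hbmem hbA
          rw [margin_antisymm P x c]
          omega
        · have hxc : x = c := by
            have h' := hmem; rw [hrec y hy hyc] at h'; exact h'
          rw [hxc]
          exact hbmax y (Finset.mem_erase.mpr ⟨hyc, hy⟩)

lemma dominant_chain {P : Profile C V} {D1 D2 : Finset C}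
    (h1 : Dominant P D1) (h2 : Dominant P D2) : D1 ⊆ D2 ∨ D2 ⊆ D1 := by
  by_cases h : D1 ⊆ D2
  · exact Or.inl h
  · right
    obtain ⟨x, hx1, hx2⟩ := Finset.not_subset.mp h
    intro y hy
    by_contra hy1
    have hbxy : P.beats x y := h1.2.2 x hx1 y (h2.1 hy) hy1
    have hbyx : P.beats y x := h2.2.2 y hy x (h1.1 hx1) hx2
    have := margin_antisymm P x y
    unfold Profile.beats at hbxy hbyx
    omega

lemma exists_isSmith (P : Profile C V) (h : P.cands.Nonempty) : ∃ S, IsSmith P S := by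
  classical
  set D := P.cands.powerset.filter (fun T => Dominant P T) with hD
  have hPD : P.cands ∈ D := Finset.mem_filter.mpr ⟨Finset.mem_powerset_self _,
    subset_rfl, h, fun a _ b hb hb' => absurd hb hb'⟩
  obtain ⟨S, hSD, hmin⟩ := Finset.exists_min_image D Finset.card ⟨_, hPD⟩
  have hSdom : Dominant P S := (Finset.mem_filter.mp hSD).2
  refine ⟨S, hSdom, fun T hT => ?_⟩
  rcases dominant_chain hSdom hT with hST | hTS
  · exact hST
  · have hTD : T ∈ D := Finset.mem_filter.mpr ⟨Finset.mem_powerset.mpr hT.1, hT⟩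
    have := Finset.eq_of_subset_of_card_le hTS (hmin T hTD)
    rw [this]

lemma smith_remove {P : Profile C V} {S : Finset C} (hS : IsSmith P S) {B y : C}
    (hBS : B ∉ S) (hy : y ∈ P.cands) (hyB : y ≠ B) (h2 : 2 ≤ S.card) :
    ∀ T, IsSmith (P.remove y) T → B ∉ T := by
  intro T hT
  have hdom : Dominant (P.remove y) (S.erase y) := by
    refine ⟨?_, ?_, ?_⟩
    · rw [remove_cands]
      exact Finset.erase_subset_erase y hS.1.1
    · rw [← Finset.card_pos]
      by_cases hyS : y ∈ S
      · rw [Finset.card_erase_of_mem hyS]; omega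
      · rw [Finset.erase_eq_of_notMem hyS]; omega
    · intro a ha b hb hbS
      have haS : a ∈ S := Finset.mem_of_mem_erase ha
      rw [remove_cands] at hb
      have hbne : b ≠ y := (Finset.mem_erase.mp hb).1
      have hbS' : b ∉ S := fun hbin => hbS (Finset.mem_erase.mpr ⟨hbne, hbin⟩)
      exact hS.1.2.2 a haS b (Finset.mem_of_mem_erase hb) hbS'
  have hsub : T ⊆ S.erase y := hT.2 _ hdom
  intro hBT
  exact hBS (Finset.mem_of_mem_erase (hsub hBT))

lemma main_aux : ∀ (n : ℕ) (P : Profile C V), P.cands.card = n →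
    ∀ (A B : C) (S : Finset C), UniquelyWeighted P → IsSmith P S →
    B ∈ P.cands → B ∉ S → A ≠ B →
    (A ∈ SV P ↔ A ∈ SV (P.remove B)) := by
  intro n
  induction n with
  | zero =>
    intro P h A B S hu hS hB hBS hAB
    exact absurd hB (by simp [Finset.card_eq_zero.mp h])
  | succ n ih =>
    intro P hcard A B S hu hS hB hBS hAB
    have hScands : S ⊆ P.cands := hS.1.1
    have hSsub : S ⊆ P.cands.erase B :=
      fun x hx => Finset.mem_erase.mpr ⟨fun h => hBS (h ▸ hx), hScands hx⟩
    have hSne : S.Nonempty := hS.1.2.1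
    rcases Nat.lt_or_ge S.card 2 with hS1 | hS2
    · -- Smith set is a singleton: Condorcet winner case
      obtain ⟨c, hc⟩ : ∃ c, S = {c} :=
        Finset.card_eq_one.mp (le_antisymm (by omega) (Finset.card_pos.mpr hSne))
      subst hc
      have hcB : c ≠ B := fun h => hBS (h ▸ Finset.mem_singleton_self c)
      have hcmem : c ∈ P.cands := hScands (Finset.mem_singleton_self c)
      have hCW : CondorcetWinner P c := ⟨hcmem,
        fun b hb hbc => hS.1.2.2 c (Finset.mem_singleton_self c) b hb
          (Finset.notMem_singleton.mpr hbc)⟩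
      have hCW' : CondorcetWinner (P.remove B) c := by
        refine ⟨?_, ?_⟩
        · rw [remove_cands]; exact Finset.mem_erase.mpr ⟨hcB, hcmem⟩
        · intro b hb hbc
          rw [remove_cands] at hb
          exact hCW.2 b (Finset.mem_of_mem_erase hb) hbc
      rw [SV_CW _ P rfl c hCW, SV_CW _ (P.remove B) rfl c hCW']
    · -- Smith set has at least two members
      have hn2 : 2 ≤ n := by
        have := Finset.card_le_card hSsub
        rw [Finset.card_erase_of_mem hB] at this
        omega
      have hQcard : (P.remove B).cands.card = n := by rw [remove_card P hB]; omega
      have hQuw : UniquelyWeighted (P.remove B) := UW_remove hu B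
      -- key: removing B does not affect SV of one-candidate-removed profiles
      have key : ∀ y ∈ P.cands, y ≠ B → ∀ x, x ≠ B →
          (x ∈ SV (P.remove y) ↔ x ∈ SV ((P.remove B).remove y)) := by
        intro y hy hyB x hxB
        by_cases hx : x ∈ (P.remove y).cands
        · obtain ⟨T, hT⟩ := exists_isSmith (P.remove y) ⟨x, hx⟩
          have hBT : B ∉ T := smith_remove hS hBS hy hyB hS2 T hT
          have hBy : B ∈ (P.remove y).cands := by
            rw [remove_cands]; exact Finset.mem_erase.mpr ⟨Ne.symm hyB, hB⟩
          have := ih (P.remove y) (by rw [remove_card P hy]; omega) x B T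
            (UW_remove hu y) hT hBy hBT hxB
          rw [this, remove_comm]
        · constructor
          · intro h; exact absurd (SV_subset h) hx
          · intro h
            have hmem := SV_subset h
            rw [remove_comm, remove_cands, remove_cands] at hmem
            rw [remove_cands] at hx
            exact absurd (Finset.mem_of_mem_erase hmem) hx
      -- the unique winner of P.remove B
      obtain ⟨A', hA'⟩ := SV_nonempty' (P.remove B)
        (Finset.card_pos.mp (by omega))
      have hA'Q : A' ∈ (P.remove B).cands := SV_subset hA'
      have hA'B : A' ≠ B := by
        rw [remove_cands] at hA'Q; exact (Finset.mem_erase.mp hA'Q).1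
      have hA'cands : A' ∈ P.cands := by
        rw [remove_cands] at hA'Q; exact Finset.mem_of_mem_erase hA'Q
      obtain ⟨b', hb'Q, hb'A', hA'rem, max'⟩ := (mem_SV_iff (by omega) A').mp hA'
      have hb'B : b' ≠ B := by
        rw [remove_cands] at hb'Q; exact (Finset.mem_erase.mp hb'Q).1
      have hb'cands : b' ∈ P.cands := by
        rw [remove_cands] at hb'Q; exact Finset.mem_of_mem_erase hb'Q
      have hA'P : A' ∈ SV (P.remove b') := (key b' hb'cands hb'B A' hA'B).mpr hA'rem
      -- B is never an SV winner of a one-removed profile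
      have noB : ∀ y ∈ P.cands, y ≠ B → B ∉ SV (P.remove y) := by
        intro y hy hyB hBin
        have hyQ : y ∈ (P.remove B).cands := by
          rw [remove_cands]; exact Finset.mem_erase.mpr ⟨hyB, hy⟩
        have hcard2 : ((P.remove B).remove y).cands.card = n - 1 := by
          rw [remove_card _ hyQ, hQcard]
        obtain ⟨x', hx'⟩ := SV_nonempty' ((P.remove B).remove y)
          (Finset.card_pos.mp (by omega))
        have hx'mem := SV_subset hx'
        have hx'B : x' ≠ B := by
          rw [remove_cands, remove_cands] at hx'mem
          exact (Finset.mem_erase.mp (Finset.mem_of_mem_erase hx'mem)).1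
        have hx'P : x' ∈ SV (P.remove y) := (key y hy hyB x' hx'B).mpr hx'
        exact hx'B (SV_unique (UW_remove hu y) hx'P hBin)
      -- A' is also the winner of P
      have hA'win : A' ∈ SV P := by
        rw [mem_SV_iff (by omega : 2 ≤ P.cands.card)]
        rcases le_or_gt (P.margin A' B) (P.margin A' b') with hle | hlt
        · refine ⟨b', hb'cands, hb'A', hA'P, ?_⟩
          intro x hx y hy hxy hmem
          by_cases hyB2 : y = B
          · rw [hyB2] at hmem
            have hxA' : x = A' := SV_unique hQuw hmem hA'
            rw [hxA', hyB2]
            exact hle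
          · have hxB2 : x ≠ B := fun h => noB y hy hyB2 (h ▸ hmem)
            have hmem' : x ∈ SV ((P.remove B).remove y) := (key y hy hyB2 x hxB2).mp hmem
            have hxQ : x ∈ (P.remove B).cands := by
              rw [remove_cands]; exact Finset.mem_erase.mpr ⟨hxB2, hx⟩
            have hyQ : y ∈ (P.remove B).cands := by
              rw [remove_cands]; exact Finset.mem_erase.mpr ⟨hyB2, hy⟩
            exact max' x hxQ y hyQ hxy hmem'
        · refine ⟨B, hB, Ne.symm hA'B, hA', ?_⟩
          intro x hx y hy hxy hmem
          by_cases hyB2 : y = B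
          · rw [hyB2] at hmem
            have hxA' : x = A' := SV_unique hQuw hmem hA'
            rw [hxA', hyB2]
          · have hxB2 : x ≠ B := fun h => noB y hy hyB2 (h ▸ hmem)
            have hmem' : x ∈ SV ((P.remove B).remove y) := (key y hy hyB2 x hxB2).mp hmem
            have hxQ : x ∈ (P.remove B).cands := by
              rw [remove_cands]; exact Finset.mem_erase.mpr ⟨hxB2, hx⟩
            have hyQ : y ∈ (P.remove B).cands := by
              rw [remove_cands]; exact Finset.mem_erase.mpr ⟨hyB2, hy⟩
            have := max' x hxQ y hyQ hxy hmem'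
            have hm : ((P.remove B).margin x y : ℤ) = P.margin x y := rfl
            have hm2 : ((P.remove B).margin A' b' : ℤ) = P.margin A' b' := rfl
            omega
      constructor
      · intro hASV
        have : A = A' := SV_unique hu hASV hA'win
        rw [this]; exact hA'
      · intro hASV
        have : A = A' := SV_unique hQuw hASV hA'
        rw [this]; exact hA'win

/-- In a uniquely weighted profile, removing a candidate `B`
outside the Smith set does not change whether any candidate `A ≠ B` is a
Stable Voting winner. -/
theorem sv_remove_nonSmith (P : Profile C V) (A B : C) (S : Finset C)
    (hu : UniquelyWeighted P) (hS : IsSmith P S)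
    (hB : B ∈ P.cands) (hBS : B ∉ S)
    (hA : A ∈ P.cands) (hAB : A ≠ B) :
    (A ∈ SV P ↔ A ∈ SV (P.remove B)) :=
  main_aux P.cands.card P rfl A B S hu hS hB hBS hAB
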